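/- For n ≥ 2r, the tensor permutation matrices {P_σ : σ ∈ S_{2r}} acting on (ℂ^n)^{⊗2r} are linearly independent in the space of matrices on (ℂ^n)^{⊗2r}. -/

import Mathlib

/-- The tensor permutation matrix `P_σ` on `(ℂ^n)^{⊗ m}`, acting on simple tensors by
`P_σ (x_1 ⊗ ⋯ ⊗ x_m) = x_{σ⁻¹(1)} ⊗ ⋯ ⊗ x_{σ⁻¹(m)}`.  The space `(ℂ^n)^{⊗ m}` is
identified with functions `(Fin m → Fin n) → ℂ` via the canonical product basis. -/
def tensorPerm (n m : ℕ) (σ : Equiv.Perm (Fin m)) :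
    Matrix (Fin m → Fin n) (Fin m → Fin n) ℂ :=
  Matrix.of fun i j => if ∀ x, i x = j (σ⁻¹ x) then 1 else 0

/-- For `n ≥ 2r`, the tensor permutation matrices `{P_σ : σ ∈ S_{2r}}` on `(ℂ^n)^{⊗ 2r}`
are linearly independent. -/
theorem tensorPerm_linearIndependent (r n : ℕ) (h : 2 * r ≤ n) :
    LinearIndependent ℂ (fun σ : Equiv.Perm (Fin (2 * r)) => tensorPerm n (2 * r) σ) := by
  rw [Fintype.linearIndependent_iff]
  intro g hg τ
  set j : Fin (2 * r) → Fin n := Fin.castLE h with hj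
  have hjinj : Function.Injective j := Fin.castLE_injective h
  have key : ∀ σ : Equiv.Perm (Fin (2 * r)),
      (∀ x, j (τ⁻¹ x) = j (σ⁻¹ x)) ↔ σ = τ := by
    intro σ
    constructor
    · intro hx
      have : σ⁻¹ = τ⁻¹ := Equiv.ext fun x => (hjinj (hx x)).symm
      simpa using congrArg Inv.inv this
    · rintro rfl; intro x; rfl
  calc g τ = ∑ σ : Equiv.Perm (Fin (2 * r)),
        g σ * (if ∀ x, j (τ⁻¹ x) = j (σ⁻¹ x) then (1 : ℂ) else 0) := by
        rw [Finset.sum_eq_single τ]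
        · simp [key]
        · intro σ _ hστ; rw [if_neg (fun hx => hστ ((key σ).1 hx)), mul_zero]
        · intro hτ; exact absurd (Finset.mem_univ τ) hτ
    _ = 0 := by
        have h0 := congrFun (congrFun hg (fun x => j (τ⁻¹ x))) j
        simpa [tensorPerm, Matrix.sum_apply, Finset.sum_apply,
          Matrix.smul_apply] using h0
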